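/- The Eicker–Huber–White (HC0) covariance estimator of β̂2 from the full regression equals that from the partial regression: the (2,2) block of (X'X)^{-1}X' diag(ε̂²) X(X'X)^{-1} equals (X̃2'X̃2)^{-1}X̃2' diag(ε̃²) X̃2(X̃2'X̃2)^{-1}, where ε̂ = (I-H)Y and ε̃ = (I-H̃2)(I-H1)Y. -/

import Mathlib

/-!
Frisch–Waugh–Lovell. With `X = (X₁ X₂)` and `X̃₂ = (1 - H₁) X₂`, the least-squares map
`B = (XᵀX)⁻¹Xᵀ` has lower rows `M₂ = (X̃₂ᵀX̃₂)⁻¹X̃₂ᵀ` and upper rows `(X₁ᵀX₁)⁻¹X₁ᵀ(1 - X₂ M₂)`, as one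
checks on the normal equations `XᵀX B = Xᵀ`. Hence the lower block of the sandwich `B Ω Bᵀ` is
`M₂ Ω M₂ᵀ` for every `Ω`, and `H = XB = H₁ + H̃₂` with `H̃₂ H₁ = 0`, so `1 - H = (1 - H̃₂)(1 - H₁)`
and the two residual vectors coincide.
-/

open Matrix

namespace OLS

variable {R m p k l : Type*} [CommRing R] [Fintype m] [Fintype p] [DecidableEq p]

noncomputable def leastSquaresMap (A : Matrix m p R) : Matrix p m R := (Aᵀ * A)⁻¹ * Aᵀ

noncomputable def hatMatrix (A : Matrix m p R) : Matrix m m R := A * (Aᵀ * A)⁻¹ * Aᵀ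

noncomputable def sandwich (A : Matrix m p R) (Ω : Matrix m m R) : Matrix p p R :=
  (Aᵀ * A)⁻¹ * Aᵀ * Ω * A * (Aᵀ * A)⁻¹

section Projection

variable (A : Matrix m p R)

lemma transpose_inv_gram : ((Aᵀ * A)⁻¹)ᵀ = (Aᵀ * A)⁻¹ := by
  rw [transpose_nonsing_inv, transpose_mul, transpose_transpose]

lemma transpose_leastSquaresMap : (leastSquaresMap A)ᵀ = A * (Aᵀ * A)⁻¹ := by
  rw [leastSquaresMap, transpose_mul, transpose_transpose, transpose_inv_gram]

lemma hatMatrix_eq_mul_leastSquaresMap : hatMatrix A = A * leastSquaresMap A :=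
  Matrix.mul_assoc _ _ _

lemma sandwich_eq (Ω : Matrix m m R) :
    sandwich A Ω = leastSquaresMap A * Ω * (leastSquaresMap A)ᵀ := by
  rw [transpose_leastSquaresMap, sandwich, leastSquaresMap, Matrix.mul_assoc _ A]

lemma transpose_hatMatrix : (hatMatrix A)ᵀ = hatMatrix A := by
  rw [hatMatrix, transpose_mul, transpose_mul, transpose_transpose, transpose_inv_gram,
    Matrix.mul_assoc]

variable {A}

lemma gram_mul_leastSquaresMap (hA : IsUnit (Aᵀ * A)) : Aᵀ * A * leastSquaresMap A = Aᵀ :=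
  mul_nonsing_inv_cancel_left _ _ ((isUnit_iff_isUnit_det _).mp hA)

lemma hatMatrix_mul_hatMatrix (hA : IsUnit (Aᵀ * A)) :
    hatMatrix A * hatMatrix A = hatMatrix A := by
  rw [hatMatrix_eq_mul_leastSquaresMap, Matrix.mul_assoc, ← Matrix.mul_assoc (leastSquaresMap A),
    leastSquaresMap, Matrix.mul_assoc _ Aᵀ, nonsing_inv_mul _ ((isUnit_iff_isUnit_det _).mp hA),
    Matrix.one_mul]

lemma hatMatrix_mul_one_sub [DecidableEq m] (hA : IsUnit (Aᵀ * A)) :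
    hatMatrix A * (1 - hatMatrix A) = 0 := by
  rw [Matrix.mul_sub, Matrix.mul_one, hatMatrix_mul_hatMatrix hA, sub_self]

end Projection

section Partition

variable [DecidableEq m] [Fintype k] [DecidableEq k]
  (X1 : Matrix m k R) (X2 : Matrix m l R)

/-- The regressors `X̃₂` of the partial regression: `X₂` with `X₁` partialled out. -/
noncomputable def partialOut : Matrix m l R := (1 - hatMatrix X1) * X2

lemma transpose_partialOut : (partialOut X1 X2)ᵀ = X2ᵀ * (1 - hatMatrix X1) := by
  rw [partialOut, transpose_mul, transpose_sub, transpose_one, transpose_hatMatrix]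

variable {X1}

lemma hatMatrix_mul_partialOut (h1 : IsUnit (X1ᵀ * X1)) :
    hatMatrix X1 * partialOut X1 X2 = 0 := by
  rw [partialOut, ← Matrix.mul_assoc, hatMatrix_mul_one_sub h1, Matrix.zero_mul]

lemma transpose_partialOut_mul_hatMatrix (h1 : IsUnit (X1ᵀ * X1)) :
    (partialOut X1 X2)ᵀ * hatMatrix X1 = 0 := by
  rw [← transpose_hatMatrix, ← transpose_mul, hatMatrix_mul_partialOut X2 h1, transpose_zero]

lemma transpose_partialOut_mul_self (h1 : IsUnit (X1ᵀ * X1)) :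
    (partialOut X1 X2)ᵀ * partialOut X1 X2 = (partialOut X1 X2)ᵀ * X2 := by
  rw [partialOut, ← Matrix.mul_assoc, ← partialOut, Matrix.mul_sub, Matrix.mul_one,
    transpose_partialOut_mul_hatMatrix X2 h1, sub_zero]

variable [Fintype l] [DecidableEq l]

lemma leastSquaresMap_fromCols (hX : IsUnit ((fromCols X1 X2)ᵀ * fromCols X1 X2))
    (h1 : IsUnit (X1ᵀ * X1)) (h2 : IsUnit ((partialOut X1 X2)ᵀ * partialOut X1 X2)) :
    leastSquaresMap (fromCols X1 X2) =
      fromRows (leastSquaresMap X1 * (1 - X2 * leastSquaresMap (partialOut X1 X2)))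
        (leastSquaresMap (partialOut X1 X2)) := by
  set M2 := leastSquaresMap (partialOut X1 X2)
  have hrows1 : X1ᵀ * X1 * (leastSquaresMap X1 * (1 - X2 * M2)) + X1ᵀ * X2 * M2 = X1ᵀ := by
    rw [← Matrix.mul_assoc, gram_mul_leastSquaresMap h1, Matrix.mul_sub, Matrix.mul_one,
      Matrix.mul_assoc X1ᵀ X2, sub_add_cancel]
  have hrows2 : X2ᵀ * X1 * (leastSquaresMap X1 * (1 - X2 * M2)) + X2ᵀ * X2 * M2 = X2ᵀ := by
    have hfit : (partialOut X1 X2)ᵀ * X2 * M2 = (partialOut X1 X2)ᵀ := by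
      rw [← transpose_partialOut_mul_self X2 h1, gram_mul_leastSquaresMap h2]
    calc X2ᵀ * X1 * (leastSquaresMap X1 * (1 - X2 * M2)) + X2ᵀ * X2 * M2
        = X2ᵀ * hatMatrix X1 + X2ᵀ * (1 - hatMatrix X1) * X2 * M2 := by
          rw [hatMatrix_eq_mul_leastSquaresMap]
          simp only [Matrix.mul_sub, Matrix.sub_mul, Matrix.mul_one, Matrix.mul_assoc]
          abel
      _ = X2ᵀ := by
          rw [← transpose_partialOut, hfit, transpose_partialOut, Matrix.mul_sub, Matrix.mul_one,
            add_sub_cancel]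
  have hnormal : (fromCols X1 X2)ᵀ * fromCols X1 X2 *
      fromRows (leastSquaresMap X1 * (1 - X2 * M2)) M2 = (fromCols X1 X2)ᵀ := by
    rw [transpose_fromCols, fromRows_mul_fromCols, fromBlocks_mul_fromRows, hrows1, hrows2]
  have hsolve := nonsing_inv_mul_cancel_left _ (fromRows (leastSquaresMap X1 * (1 - X2 * M2)) M2)
    ((isUnit_iff_isUnit_det _).mp hX)
  rwa [hnormal] at hsolve

lemma hatMatrix_fromCols (hX : IsUnit ((fromCols X1 X2)ᵀ * fromCols X1 X2))
    (h1 : IsUnit (X1ᵀ * X1)) (h2 : IsUnit ((partialOut X1 X2)ᵀ * partialOut X1 X2)) :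
    hatMatrix (fromCols X1 X2) = hatMatrix X1 + hatMatrix (partialOut X1 X2) := by
  rw [hatMatrix_eq_mul_leastSquaresMap, leastSquaresMap_fromCols X2 hX h1 h2,
    fromCols_mul_fromRows, hatMatrix_eq_mul_leastSquaresMap, hatMatrix_eq_mul_leastSquaresMap,
    partialOut, hatMatrix_eq_mul_leastSquaresMap]
  simp only [Matrix.mul_sub, Matrix.sub_mul, Matrix.mul_one, Matrix.one_mul, Matrix.mul_assoc]
  abel

lemma one_sub_hatMatrix_fromCols (hX : IsUnit ((fromCols X1 X2)ᵀ * fromCols X1 X2))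
    (h1 : IsUnit (X1ᵀ * X1)) (h2 : IsUnit ((partialOut X1 X2)ᵀ * partialOut X1 X2)) :
    1 - hatMatrix (fromCols X1 X2) =
      (1 - hatMatrix (partialOut X1 X2)) * (1 - hatMatrix X1) := by
  have horth : hatMatrix (partialOut X1 X2) * hatMatrix X1 = 0 := by
    rw [hatMatrix, Matrix.mul_assoc, transpose_partialOut_mul_hatMatrix X2 h1, Matrix.mul_zero]
  rw [hatMatrix_fromCols X2 hX h1 h2, Matrix.sub_mul, Matrix.mul_sub, Matrix.mul_sub, horth]
  simp only [Matrix.one_mul, Matrix.mul_one]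
  abel

lemma toBlocks₂₂_sandwich_fromCols (Ω : Matrix m m R)
    (hX : IsUnit ((fromCols X1 X2)ᵀ * fromCols X1 X2))
    (h1 : IsUnit (X1ᵀ * X1)) (h2 : IsUnit ((partialOut X1 X2)ᵀ * partialOut X1 X2)) :
    (sandwich (fromCols X1 X2) Ω).toBlocks₂₂ = sandwich (partialOut X1 X2) Ω := by
  rw [sandwich_eq, sandwich_eq, leastSquaresMap_fromCols X2 hX h1 h2, transpose_fromRows,
    fromRows_mul, fromRows_mul_fromCols, toBlocks_fromBlocks₂₂]

end Partition

end OLS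

open OLS

theorem stmt_8 {n K L : ℕ}
    (X1 : Matrix (Fin n) (Fin K) ℝ) (X2 : Matrix (Fin n) (Fin L) ℝ) (Y : Fin n → ℝ)
    (X : Matrix (Fin n) (Fin K ⊕ Fin L) ℝ) (hX : X = Matrix.fromCols X1 X2)
    (H : Matrix (Fin n) (Fin n) ℝ) (hH : H = X * (Xᵀ * X)⁻¹ * Xᵀ)
    (H1 : Matrix (Fin n) (Fin n) ℝ) (hH1 : H1 = X1 * (X1ᵀ * X1)⁻¹ * X1ᵀ)
    (X2t : Matrix (Fin n) (Fin L) ℝ) (hX2t : X2t = (1 - H1) * X2)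
    (H2t : Matrix (Fin n) (Fin n) ℝ) (hH2t : H2t = X2t * (X2tᵀ * X2t)⁻¹ * X2tᵀ)
    (epsHat : Fin n → ℝ) (hepsHat : epsHat = (1 - H) *ᵥ Y)
    (epsTilde : Fin n → ℝ) (hepsTilde : epsTilde = (1 - H2t) *ᵥ ((1 - H1) *ᵥ Y))
    (hGX : IsUnit (Xᵀ * X)) (hG1 : IsUnit (X1ᵀ * X1)) (hG2 : IsUnit (X2tᵀ * X2t)) :
    ((Xᵀ * X)⁻¹ * Xᵀ * Matrix.diagonal (fun i => epsHat i ^ 2) * X * (Xᵀ * X)⁻¹).toBlocks₂₂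
      = (X2tᵀ * X2t)⁻¹ * X2tᵀ * Matrix.diagonal (fun i => epsTilde i ^ 2) * X2t
          * (X2tᵀ * X2t)⁻¹ := by
  subst hX
  obtain rfl : H = hatMatrix (fromCols X1 X2) := hH
  obtain rfl : H1 = hatMatrix X1 := hH1
  obtain rfl : X2t = partialOut X1 X2 := hX2t
  obtain rfl : H2t = hatMatrix (partialOut X1 X2) := hH2t
  have hresid : epsHat = epsTilde := by
    rw [hepsHat, hepsTilde, mulVec_mulVec, one_sub_hatMatrix_fromCols X2 hGX hG1 hG2]
  subst hresid
  exact toBlocks₂₂_sandwich_fromCols X2 _ hGX hG1 hG2
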